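/- arXiv:1412.4489 — 5 statements merged into one kernel-verified Lean document; each statement's English description precedes it below -/
import Mathlib

section
/- For all real τ ≠ 0, t, u, v, y and all real a₁, a₂, A, B, b₁, b₂, d₁₁, d₁₂, d₂₂, with C₁ = 1 − e^{−t/τ}, C₂ = (t+τ)e^{−t/τ} − τ, C₃ = t − τ + τ e^{−t/τ}, C₄ = −(t² + 2tτ)e^{−t/τ}, C₅ = t² − 2tτ, C₆ = −tτ(1 + e^{−t/τ}), C₇ = e^{−t/τ}, C₈ = −t e^{−t/τ}, the following identity holds. Let K = C₇[1 − τ(a₁u + a₂v + A)] + C₈[a₁u − τ((a₁² + d₁₁)u² + (a₁a₂ + d₁₂)uv + (A a₁ + b₁)u)] + C₈[a₂v − τ((a₁a₂ + d₁₂)uv + (a₂² + d₂₂)v² + (A a₂ + b₂)v)] + C₇[a₂ − τ((a₁a₂ + d₁₂)u + (a₂² + d₂₂)v + (A a₂ + b₂))]·y + (1/2)C₇[(a₁² + d₁₁)u²t² − 2(a₁a₂ + d₁₂)ut(y − vt) + (a₂² + d₂₂)(y − vt)²], and let H = C₁ + C₂a₁u + C₂a₂v + C₁a₂y + C₃A +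 (1/2)C₄(a₁² + d₁₁)u² + C₆(A a₁ + b₁)u + (1/2)C₅(A² + B) + (1/2)C₁(a₂² + d₂₂)y² + C₂(a₂² + d₂₂)vy + (1/2)C₄(a₂² + d₂₂)v² + C₂(a₁a₂ + d₁₂)uy + C₄(a₁a₂ + d₁₂)uv + C₃(A a₂ + b₂)y + C₆(A a₂ + b₂)v. Then K + H = [1 − τ(a₁u + a₂v + A)] + [a₂ − τ((a₁a₂ + d₁₂)u + (a₂² + d₂₂)v + (A a₂ + b₂))]·y + [A − τ((A a₁ + b₁)u + (A a₂ + b₂)v + (A² + B))]·t + (1/2)(a₂² + d₂₂)y² + (A a₂ + b₂)yt + (1/2)(A² + B)t². -/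
theorem gks_smooth_limit_identity (τ t u v y : ℝ) (hτ : τ ≠ 0)
    (a₁ a₂ A B b₁ b₂ d₁₁ d₁₂ d₂₂ : ℝ) :
    let C₁ := 1 - Real.exp (-t / τ)
    let C₂ := (t + τ) * Real.exp (-t / τ) - τ
    let C₃ := t - τ + τ * Real.exp (-t / τ)
    let C₄ := -(t ^ 2 + 2 * t * τ) * Real.exp (-t / τ)
    let C₅ := t ^ 2 - 2 * t * τ
    let C₆ := -t * τ * (1 + Real.exp (-t / τ))
    let C₇ := Real.exp (-t / τ)
    let C₈ := -t * Real.exp (-t / τ)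
    let K := C₇ * (1 - τ * (a₁ * u + a₂ * v + A))
      + C₈ * (a₁ * u - τ * ((a₁ ^ 2 + d₁₁) * u ^ 2 + (a₁ * a₂ + d₁₂) * u * v
          + (A * a₁ + b₁) * u))
      + C₈ * (a₂ * v - τ * ((a₁ * a₂ + d₁₂) * u * v + (a₂ ^ 2 + d₂₂) * v ^ 2
          + (A * a₂ + b₂) * v))
      + C₇ * (a₂ - τ * ((a₁ * a₂ + d₁₂) * u + (a₂ ^ 2 + d₂₂) * v
          + (A * a₂ + b₂))) * y
      + (1 / 2) * C₇ * ((a₁ ^ 2 + d₁₁) * u ^ 2 * t ^ 2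
          - 2 * (a₁ * a₂ + d₁₂) * u * t * (y - v * t)
          + (a₂ ^ 2 + d₂₂) * (y - v * t) ^ 2)
    let H := C₁ + C₂ * a₁ * u + C₂ * a₂ * v + C₁ * a₂ * y + C₃ * A
      + (1 / 2) * C₄ * (a₁ ^ 2 + d₁₁) * u ^ 2 + C₆ * (A * a₁ + b₁) * u
      + (1 / 2) * C₅ * (A ^ 2 + B)
      + (1 / 2) * C₁ * (a₂ ^ 2 + d₂₂) * y ^ 2 + C₂ * (a₂ ^ 2 + d₂₂) * v * y
      + (1 / 2) * C₄ * (a₂ ^ 2 + d₂₂) * v ^ 2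
      + C₂ * (a₁ * a₂ + d₁₂) * u * y + C₄ * (a₁ * a₂ + d₁₂) * u * v
      + C₃ * (A * a₂ + b₂) * y + C₆ * (A * a₂ + b₂) * v
    K + H = (1 - τ * (a₁ * u + a₂ * v + A))
      + (a₂ - τ * ((a₁ * a₂ + d₁₂) * u + (a₂ ^ 2 + d₂₂) * v + (A * a₂ + b₂))) * y
      + (A - τ * ((A * a₁ + b₁) * u + (A * a₂ + b₂) * v + (A ^ 2 + B))) * t
      + (1 / 2) * (a₂ ^ 2 + d₂₂) * y ^ 2 + (A * a₂ + b₂) * y * t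
      + (1 / 2) * (A ^ 2 + B) * t ^ 2 := by
  intro C₁ C₂ C₃ C₄ C₅ C₆ C₇ C₈ K H
  simp only [C₁,C₂,C₃,C₄,C₅,C₆,C₇,C₈,K,H]
  ring
end

section
/- There exists a constant C > 0 such that for every Δx > 0 and every three times continuously differentiable function w : [−3Δx/2, 3Δx/2] → ℝ, if P is the unique polynomial of degree at most 2 whose averages over the cells [−3Δx/2, −Δx/2], [−Δx/2, Δx/2], [Δx/2, 3Δx/2] coincide with those of w, then for all x ∈ [−Δx/2, Δx/2]: |P(x) − w(x)| ≤ C · Δx³ · sup_{ξ ∈ [−3Δx/2, 3Δx/2]} |w'''(ξ)|. -/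
open intervalIntegral Set

private lemma quad_integral (c₀ c₁ c₂ u v : ℝ) :
    (∫ x in u..v, (c₀ + c₁*x + c₂*x^2)) =
      c₀*(v-u) + c₁*(v^2-u^2)/2 + c₂*(v^3-u^3)/3 := by
  rw [intervalIntegral.integral_add ((by continuity : Continuous fun x:ℝ => c₀ + c₁*x).intervalIntegrable _ _)
        ((by continuity : Continuous fun x:ℝ => c₂*x^2).intervalIntegrable _ _),
      intervalIntegral.integral_add (intervalIntegrable_const)
        ((by continuity : Continuous fun x:ℝ => c₁*x).intervalIntegrable _ _),
      intervalIntegral.integral_const,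
      intervalIntegral.integral_const_mul, intervalIntegral.integral_const_mul,
      integral_id, integral_pow]
  push_cast
  simp only [smul_eq_mul]
  ring

set_option maxHeartbeats 1600000 in
/-- Third-order accuracy of the central-stencil cell-average reconstruction:
the quadratic matching the three consecutive cell averages of a `C³` function
approximates it to order `Δx³` on the middle cell. -/
theorem central_stencil_third_order_accuracy :
    ∃ C : ℝ, 0 < C ∧ ∀ Δx : ℝ, 0 < Δx → ∀ w : ℝ → ℝ,
      ContDiffOn ℝ 3 w (Icc (-3 * Δx / 2) (3 * Δx / 2)) →
      ∀ P : Polynomial ℝ, P.degree ≤ 2 →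
      ((1 / Δx) * ∫ x in (-3 * Δx / 2)..(-Δx / 2), P.eval x)
          = (1 / Δx) * ∫ x in (-3 * Δx / 2)..(-Δx / 2), w x →
      ((1 / Δx) * ∫ x in (-Δx / 2)..(Δx / 2), P.eval x)
          = (1 / Δx) * ∫ x in (-Δx / 2)..(Δx / 2), w x →
      ((1 / Δx) * ∫ x in (Δx / 2)..(3 * Δx / 2), P.eval x)
          = (1 / Δx) * ∫ x in (Δx / 2)..(3 * Δx / 2), w x →
      ∀ M : ℝ,
      (∀ ξ ∈ Icc (-3 * Δx / 2) (3 * Δx / 2),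
        |iteratedDerivWithin 3 w (Icc (-3 * Δx / 2) (3 * Δx / 2)) ξ| ≤ M) →
      ∀ x ∈ Icc (-Δx / 2) (Δx / 2),
        |P.eval x - w x| ≤ C * Δx ^ 3 * M := by
  refine ⟨54, by norm_num, ?_⟩
  intro Δx hΔ w hw P hdeg hL hMid hR M hM x hx
  set a : ℝ := -3 * Δx / 2 with ha
  set b : ℝ := 3 * Δx / 2 with hb
  have hab : a ≤ b := by rw [ha, hb]; linarith
  -- M is nonneg
  have hM0 : 0 ≤ M := le_trans (abs_nonneg _) (hM 0 ⟨by rw [ha]; linarith, by rw [hb]; linarith⟩)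
  -- Taylor remainder bound
  obtain ⟨ε, hε⟩ : ∃ ε : ℝ, ε = 27 * M * Δx ^ 3 / 2 := ⟨_, rfl⟩
  have hε0 : 0 ≤ ε := by rw [hε]; positivity
  have hw' : ContDiffOn ℝ (2 + 1 : ℕ) w (Icc a b) := by exact_mod_cast hw
  set T : ℝ → ℝ := fun y => taylorWithinEval w 2 (Icc a b) a y with hT
  have hTay : ∀ y ∈ Icc a b, |w y - T y| ≤ ε := by
    intro y hy
    have h1 := taylor_mean_remainder_bound (n := 2) hab hw' hy
      (fun ξ hξ => hM ξ hξ)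
    rw [hT]
    have h2 : (y - a) ^ 3 ≤ (3 * Δx) ^ 3 := by
      have : y - a ≤ 3 * Δx := by
        have := hy.2; rw [ha, hb] at *; linarith
      have h0 : 0 ≤ y - a := by have := hy.1; linarith
      exact pow_le_pow_left₀ h0 this 3
    refine h1.trans ?_
    have hfac : ((Nat.factorial 2 : ℕ) : ℝ) = 2 := by norm_num [Nat.factorial]
    rw [hfac, hε]
    linarith [mul_le_mul_of_nonneg_left h2 hM0]
  -- difference of P and Taylor polynomial is an explicit quadratic
  have hdeg3 : P.natDegree < 3 := by
    have h2 : P.natDegree ≤ 2 := Polynomial.natDegree_le_iff_degree_le.mpr hdeg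
    omega
  obtain ⟨c₀, c₁, c₂, hq⟩ : ∃ c₀ c₁ c₂ : ℝ, ∀ y : ℝ,
      P.eval y - T y = c₀ + c₁*y + c₂*y^2 := by
    refine ⟨P.coeff 0 - (iteratedDerivWithin 0 w (Icc a b) a
        - a * iteratedDerivWithin 1 w (Icc a b) a
        + a^2 * iteratedDerivWithin 2 w (Icc a b) a / 2),
      P.coeff 1 - (iteratedDerivWithin 1 w (Icc a b) a
        - a * iteratedDerivWithin 2 w (Icc a b) a),
      P.coeff 2 - iteratedDerivWithin 2 w (Icc a b) a / 2, fun y => ?_⟩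
    rw [hT]
    simp only [taylor_within_apply, Polynomial.eval_eq_sum_range' hdeg3,
      Finset.sum_range_succ, Finset.sum_range_zero, Nat.factorial, smul_eq_mul]
    push_cast
    ring
  -- continuity facts
  have hwc : ContinuousOn w (Icc a b) := hw.continuousOn
  have hTc : Continuous T := by
    have : T = fun y => P.eval y - (c₀ + c₁*y + c₂*y^2) := by
      funext y; have := hq y; linarith
    rw [this]
    exact P.continuous.sub (by fun_prop)
  -- per-cell estimate
  have key : ∀ u v : ℝ, a ≤ u → u ≤ v → v ≤ b →
      (∫ y in u..v, P.eval y) = (∫ y in u..v, w y) →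
      |c₀*(v-u) + c₁*(v^2-u^2)/2 + c₂*(v^3-u^3)/3| ≤ ε * (v - u) := by
    intro u v hau huv hvb hPw
    have hsub : Icc u v ⊆ Icc a b := Icc_subset_Icc hau hvb
    have hsub' : uIcc u v ⊆ Icc a b := by rw [uIcc_of_le huv]; exact hsub
    have hwint : IntervalIntegrable w MeasureTheory.volume u v :=
      (hwc.mono hsub').intervalIntegrable
    have hPint : IntervalIntegrable (fun y => P.eval y) MeasureTheory.volume u v :=
      (P.continuous.intervalIntegrable _ _)
    have hTint : IntervalIntegrable T MeasureTheory.volume u v :=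
      hTc.intervalIntegrable _ _
    have e1 : (∫ y in u..v, (c₀ + c₁*y + c₂*y^2)) = ∫ y in u..v, (w y - T y) := by
      have e2 : (∫ y in u..v, (c₀ + c₁*y + c₂*y^2)) = ∫ y in u..v, (P.eval y - T y) := by
        refine (intervalIntegral.integral_congr fun y _ => ?_).symm
        exact hq y
      rw [e2, intervalIntegral.integral_sub hPint hTint, hPw,
        ← intervalIntegral.integral_sub hwint hTint]
    rw [← quad_integral, e1]
    have hb2 : ‖∫ y in u..v, (w y - T y)‖ ≤ ε * |v - u| := by
      apply intervalIntegral.norm_integral_le_of_norm_le_const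
      intro y hy
      have hyI : y ∈ Icc u v := by
        rw [uIoc_of_le huv] at hy
        exact ⟨le_of_lt hy.1, hy.2⟩
      rw [Real.norm_eq_abs]
      exact hTay y (hsub hyI)
    rw [Real.norm_eq_abs] at hb2
    rwa [abs_of_nonneg (by linarith : (0:ℝ) ≤ v - u)] at hb2
  -- the three cells
  have hΔne : (1:ℝ)/Δx ≠ 0 := by positivity
  have hMid' := mul_left_cancel₀ hΔne hMid
  have hL' := mul_left_cancel₀ hΔne hL
  have hR' := mul_left_cancel₀ hΔne hR
  have hA : |c₀*Δx + c₂*Δx^3/12| ≤ ε * Δx := by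
    have h := key (-Δx/2) (Δx/2) (by rw [ha]; linarith) (by linarith) (by rw [hb]; linarith) hMid'
    have e : c₀*((Δx/2)-(-Δx/2)) + c₁*((Δx/2)^2-(-Δx/2)^2)/2 + c₂*((Δx/2)^3-(-Δx/2)^3)/3
        = c₀*Δx + c₂*Δx^3/12 := by ring
    have e' : (Δx/2) - (-Δx/2) = Δx := by ring
    rwa [e, e'] at h
  have hB : |c₀*Δx + c₁*Δx^2 + 13/12*(c₂*Δx^3)| ≤ ε * Δx := by
    have h := key (Δx/2) (3*Δx/2) (by rw [ha]; linarith) (by linarith) (by rw [hb])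
      (by rw [hb] at hR'; convert hR' using 2)
    have e : c₀*((3*Δx/2)-(Δx/2)) + c₁*((3*Δx/2)^2-(Δx/2)^2)/2 + c₂*((3*Δx/2)^3-(Δx/2)^3)/3
        = c₀*Δx + c₁*Δx^2 + 13/12*(c₂*Δx^3) := by ring
    have e' : (3*Δx/2) - (Δx/2) = Δx := by ring
    rwa [e, e'] at h
  have hC : |c₀*Δx - c₁*Δx^2 + 13/12*(c₂*Δx^3)| ≤ ε * Δx := by
    have h := key (-3*Δx/2) (-Δx/2) (by rw [ha]) (by linarith) (by rw [hb]; linarith)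
      (by rw [ha] at hL'; convert hL' using 2)
    have e : c₀*((-Δx/2)-(-3*Δx/2)) + c₁*((-Δx/2)^2-(-3*Δx/2)^2)/2 + c₂*((-Δx/2)^3-(-3*Δx/2)^3)/3
        = c₀*Δx - c₁*Δx^2 + 13/12*(c₂*Δx^3) := by ring
    have e' : (-Δx/2) - (-3*Δx/2) = Δx := by ring
    rwa [e, e'] at h
  rw [abs_le] at hA hB hC
  -- coefficient bounds
  have hc2 : |c₂*Δx^3| ≤ 2 * (ε * Δx) := by
    rw [abs_le]; constructor <;> linarith
  have hc1 : |c₁*Δx^2| ≤ ε * Δx := by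
    rw [abs_le]; constructor <;> linarith
  have hc0 : |c₀*Δx| ≤ 7/6 * (ε * Δx) := by
    rw [abs_le] at hc2 ⊢; constructor <;> linarith
  have hc0' : |c₀| ≤ 7/6 * ε := by
    rw [abs_mul, abs_of_pos hΔ] at hc0
    have := le_of_mul_le_mul_right (by linarith [hc0] : |c₀| * Δx ≤ (7/6 * ε) * Δx) hΔ
    linarith
  have hc1' : |c₁| * Δx ≤ ε := by
    rw [abs_mul, abs_of_pos (by positivity : (0:ℝ) < Δx^2)] at hc1
    have h2 : |c₁| * Δx * Δx ≤ ε * Δx := by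
      have e : |c₁| * Δx * Δx = |c₁| * Δx^2 := by ring
      rw [e]; exact hc1
    exact le_of_mul_le_mul_right h2 hΔ
  have hc2' : |c₂| * Δx^2 ≤ 2 * ε := by
    rw [abs_mul, abs_of_pos (by positivity : (0:ℝ) < Δx^3)] at hc2
    have h2 : |c₂| * Δx^2 * Δx ≤ 2 * ε * Δx := by
      have e : |c₂| * Δx^2 * Δx = |c₂| * Δx^3 := by ring
      have e2 : 2 * ε * Δx = 2 * (ε * Δx) := by ring
      rw [e, e2]; exact hc2
    exact le_of_mul_le_mul_right h2 hΔ
  -- pointwise bound on the quadratic on the middle cell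
  obtain ⟨hx1, hx2⟩ := hx
  have hxabs : |x| ≤ Δx / 2 := abs_le.mpr ⟨by linarith, by linarith⟩
  have hq1 : |c₁*x| ≤ ε / 2 := by
    rw [abs_mul]
    calc |c₁| * |x| ≤ |c₁| * (Δx/2) := mul_le_mul_of_nonneg_left hxabs (abs_nonneg c₁)
      _ = (|c₁| * Δx) / 2 := by ring
      _ ≤ ε / 2 := by linarith [hc1']
  have hq2 : |c₂*x^2| ≤ ε / 2 := by
    rw [abs_mul, abs_of_nonneg (sq_nonneg x)]
    have hx2' : x^2 ≤ Δx^2/4 := by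
      have e1 : x^2 = |x|^2 := (sq_abs x).symm
      have e2 : |x|^2 ≤ (Δx/2)^2 := pow_le_pow_left₀ (abs_nonneg x) hxabs 2
      rw [e1]; calc |x|^2 ≤ (Δx/2)^2 := e2
        _ = Δx^2/4 := by ring
    calc |c₂| * x^2 ≤ |c₂| * (Δx^2/4) := mul_le_mul_of_nonneg_left hx2' (abs_nonneg c₂)
      _ = (|c₂| * Δx^2) / 4 := by ring
      _ ≤ ε / 2 := by linarith [hc2']
  have hqx : |c₀ + c₁*x + c₂*x^2| ≤ 13/6 * ε :=
    calc |c₀ + c₁*x + c₂*x^2| ≤ |c₀ + c₁*x| + |c₂*x^2| := abs_add_le _ _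
      _ ≤ |c₀| + |c₁*x| + |c₂*x^2| := by linarith [abs_add_le c₀ (c₁*x)]
      _ ≤ 13/6 * ε := by linarith
  -- conclude
  have hxI : x ∈ Icc a b := ⟨by rw [ha]; linarith, by rw [hb]; linarith⟩
  have hfin : |P.eval x - w x| ≤ 13/6 * ε + ε := by
    have e : P.eval x - w x = (c₀ + c₁*x + c₂*x^2) + (T x - w x) := by
      have := hq x; linarith
    rw [e]
    calc |(c₀ + c₁*x + c₂*x^2) + (T x - w x)|
        ≤ |c₀ + c₁*x + c₂*x^2| + |T x - w x| := abs_add_le _ _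
      _ ≤ 13/6 * ε + ε := by
          have := hTay x hxI; rw [abs_sub_comm] at this; linarith
  have : 13/6 * ε + ε = (19 * 27 / 12) * M * Δx^3 := by rw [hε]; ring
  rw [this] at hfin
  linarith [hfin, mul_nonneg hM0 (le_of_lt (pow_pos hΔ 3))]
end

section
/- There exists a constant C > 0 such that for every Δx > 0 and every three times continuously differentiable function w : [−Δx/2, 3Δx/2] → ℝ, if P is the unique polynomial of degree at most 2 satisfying (1/Δx)∫_{−Δx/2}^{Δx/2} P = (1/Δx)∫_{−Δx/2}^{Δx/2} w, (1/Δx)∫_{Δx/2}^{3Δx/2} P = (1/Δx)∫_{Δx/2}^{3Δx/2} w, and P(Δx/2) = w(Δx/2), then for all x ∈ [−Δx/2, Δx/2]: |P(x) − w(x)| ≤ C · Δx³ · sup_{ξ ∈ [−Δx/2, 3Δx/2]} |w'''(ξ)|. -/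
open intervalIntegral Set

lemma integral_quadratic' (p0 p1 p2 u v : ℝ) :
    ∫ x in u..v, (p0 + p1*x + p2*x^2) =
      (p0*v + p1*v^2/2 + p2*v^3/3) - (p0*u + p1*u^2/2 + p2*u^3/3) := by
  have hd : ∀ x : ℝ, HasDerivAt (fun x : ℝ => p0*x + p1*x^2/2 + p2*x^3/3)
      (p0 + p1*x + p2*x^2) x := by
    intro x
    have h0 : HasDerivAt (fun x : ℝ => p0*x) p0 x := by
      simpa using (hasDerivAt_id x).const_mul p0
    have h1 : HasDerivAt (fun x : ℝ => p1*x^2/2) (p1*x) x := by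
      have := ((hasDerivAt_pow 2 x).const_mul p1).div_const 2
      simpa using this.congr_deriv (by ring)
    have h2 : HasDerivAt (fun x : ℝ => p2*x^3/3) (p2*x^2) x := by
      have := ((hasDerivAt_pow 3 x).const_mul p2).div_const 3
      simpa using this.congr_deriv (by ring)
    exact (h0.add h1).add h2
  rw [integral_eq_sub_of_hasDerivAt (fun x _ => hd x)
    ((Continuous.intervalIntegrable (by continuity) u v))]

lemma taylor_two' (w : ℝ → ℝ) (s : Set ℝ) (x₀ x : ℝ) :
    taylorWithinEval w 2 s x₀ x = w x₀ + (iteratedDerivWithin 1 w s x₀) * (x - x₀)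
      + (iteratedDerivWithin 2 w s x₀) * (x - x₀)^2 / 2 := by
  rw [taylor_within_apply]
  simp [Finset.sum_range_succ, iteratedDerivWithin_zero]
  ring

lemma abs_sub_le_abs_add_abs (u v : ℝ) : |u - v| ≤ |u| + |v| := by
  simpa [sub_eq_add_neg, abs_neg] using abs_add_le u (-v)

set_option maxHeartbeats 4000000 in
/-- Third-order accuracy of the one-sided compact stencil: the quadratic matching
two consecutive cell averages and the interface point value of a `C³` function
approximates it to order `Δx³` on the cell `[−Δx/2, Δx/2]`. -/
theorem one_sided_stencil_third_order_accuracy :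
    ∃ C : ℝ, 0 < C ∧ ∀ Δx : ℝ, 0 < Δx → ∀ w : ℝ → ℝ,
      ContDiffOn ℝ 3 w (Icc (-Δx / 2) (3 * Δx / 2)) →
      ∀ P : Polynomial ℝ, P.degree ≤ 2 →
      ((1 / Δx) * ∫ x in (-Δx / 2)..(Δx / 2), P.eval x)
          = (1 / Δx) * ∫ x in (-Δx / 2)..(Δx / 2), w x →
      ((1 / Δx) * ∫ x in (Δx / 2)..(3 * Δx / 2), P.eval x)
          = (1 / Δx) * ∫ x in (Δx / 2)..(3 * Δx / 2), w x →
      P.eval (Δx / 2) = w (Δx / 2) →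
      ∀ M : ℝ,
      (∀ ξ ∈ Icc (-Δx / 2) (3 * Δx / 2),
        |iteratedDerivWithin 3 w (Icc (-Δx / 2) (3 * Δx / 2)) ξ| ≤ M) →
      ∀ x ∈ Icc (-Δx / 2) (Δx / 2),
        |P.eval x - w x| ≤ C * Δx ^ 3 * M := by
  refine ⟨7, by norm_num, ?_⟩
  intro Δx hΔ w hw P hdeg h1 h2 hpv M hM x hx
  have hab : (-Δx / 2 : ℝ) ≤ 3 * Δx / 2 := by linarith
  have ham : (-Δx / 2 : ℝ) ≤ Δx / 2 := by linarith
  have hmb : (Δx / 2 : ℝ) ≤ 3 * Δx / 2 := by linarith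
  have hM0 : 0 ≤ M := le_trans (abs_nonneg _) (hM (-Δx / 2) ⟨le_rfl, hab⟩)
  set c1 := iteratedDerivWithin 1 w (Icc (-Δx / 2) (3 * Δx / 2)) (-Δx / 2) with hc1
  set c2 := iteratedDerivWithin 2 w (Icc (-Δx / 2) (3 * Δx / 2)) (-Δx / 2) with hc2
  set Tf : ℝ → ℝ := fun y => w (-Δx / 2) + c1 * (y - (-Δx / 2))
      + c2 * (y - (-Δx / 2))^2 / 2 with hTfdef
  have hTfc : Continuous Tf := by
    rw [hTfdef]; continuity
  -- Taylor remainder bound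
  have htay : ∀ y ∈ Icc (-Δx / 2) (3 * Δx / 2),
      |w y - Tf y| ≤ M * (y - (-Δx / 2))^3 / 2 := by
    intro y hy
    have h := taylor_mean_remainder_bound (n := 2) hab (by exact_mod_cast hw) hy
      (fun z hz => by simpa [Real.norm_eq_abs] using hM z hz)
    rw [taylor_two', ← hc1, ← hc2] at h
    rw [hTfdef]
    simpa [Real.norm_eq_abs] using h
  -- polynomial coefficients
  have hnd : P.natDegree < 3 :=
    Nat.lt_succ_of_le (Polynomial.natDegree_le_iff_degree_le.mpr (by exact_mod_cast hdeg))
  have hPev : ∀ y : ℝ, P.eval y = P.coeff 0 + P.coeff 1 * y + P.coeff 2 * y^2 := by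
    intro y
    rw [Polynomial.eval_eq_sum_range' hnd]
    simp [Finset.sum_range_succ]
  set α₀ := P.coeff 0 - (w (-Δx / 2) + c1 * (Δx / 2) + c2 * (Δx^2 / 8)) with hA0def
  set α₁ := P.coeff 1 - (c1 + c2 * (Δx / 2)) with hA1def
  set α₂ := P.coeff 2 - c2 / 2 with hA2def
  have hQ : ∀ y : ℝ, P.eval y - Tf y = α₀ + α₁ * y + α₂ * y^2 := by
    intro y
    rw [hPev y, hTfdef, hA0def, hA1def, hA2def]
    ring
  -- integrability
  have hwc : ContinuousOn w (Icc (-Δx / 2) (3 * Δx / 2)) := hw.continuousOn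
  have hwint1 : IntervalIntegrable w MeasureTheory.volume (-Δx / 2) (Δx / 2) :=
    (hwc.mono (by rw [uIcc_of_le ham]; exact Icc_subset_Icc le_rfl hmb)).intervalIntegrable
  have hwint2 : IntervalIntegrable w MeasureTheory.volume (Δx / 2) (3 * Δx / 2) :=
    (hwc.mono (by rw [uIcc_of_le hmb]; exact Icc_subset_Icc ham le_rfl)).intervalIntegrable
  have hne : (1 / Δx : ℝ) ≠ 0 := by positivity
  have hw1 : (∫ y in (-Δx / 2)..(Δx / 2), P.eval y) = ∫ y in (-Δx / 2)..(Δx / 2), w y :=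
    mul_left_cancel₀ hne h1
  have hw2 : (∫ y in (Δx / 2)..(3 * Δx / 2), P.eval y)
      = ∫ y in (Δx / 2)..(3 * Δx / 2), w y :=
    mul_left_cancel₀ hne h2
  -- the three linear equations
  have e1 : α₀ * Δx + α₂ * Δx^3 / 12 = ∫ y in (-Δx / 2)..(Δx / 2), (w y - Tf y) := by
    rw [intervalIntegral.integral_sub hwint1 (hTfc.intervalIntegrable _ _), ← hw1,
      ← intervalIntegral.integral_sub ((Polynomial.continuous P).intervalIntegrable _ _)
        (hTfc.intervalIntegrable _ _),
      intervalIntegral.integral_congr (g := fun y => α₀ + α₁ * y + α₂ * y^2)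
        (fun y _ => hQ y),
      integral_quadratic']
    ring
  have e2 : α₀ * Δx + α₁ * Δx^2 + α₂ * (13 * Δx^3 / 12)
      = ∫ y in (Δx / 2)..(3 * Δx / 2), (w y - Tf y) := by
    rw [intervalIntegral.integral_sub hwint2 (hTfc.intervalIntegrable _ _), ← hw2,
      ← intervalIntegral.integral_sub ((Polynomial.continuous P).intervalIntegrable _ _)
        (hTfc.intervalIntegrable _ _),
      intervalIntegral.integral_congr (g := fun y => α₀ + α₁ * y + α₂ * y^2)
        (fun y _ => hQ y),
      integral_quadratic']
    ring
  have e3 : α₀ + α₁ * (Δx / 2) + α₂ * (Δx / 2)^2 = w (Δx / 2) - Tf (Δx / 2) := by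
    rw [← hQ (Δx / 2), hpv]
  -- bounds on the data
  have hb1 : |∫ y in (-Δx / 2)..(Δx / 2), (w y - Tf y)| ≤ M * Δx^4 / 2 := by
    have h := intervalIntegral.norm_integral_le_of_norm_le_const (C := M * Δx^3 / 2)
      (f := fun y => w y - Tf y) (a := -Δx / 2) (b := Δx / 2) ?_
    · rw [Real.norm_eq_abs] at h
      refine h.trans ?_
      rw [abs_of_pos (by linarith : (0:ℝ) < Δx / 2 - (-Δx / 2))]
      nlinarith [hM0, pow_pos hΔ 3]
    · intro y hy
      rw [uIoc_of_le ham] at hy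
      have hy' : y ∈ Icc (-Δx / 2) (3 * Δx / 2) := ⟨hy.1.le, le_trans hy.2 hmb⟩
      have ht := htay y hy'
      rw [Real.norm_eq_abs]
      refine ht.trans ?_
      have h3 : (y - (-Δx / 2))^3 ≤ Δx^3 :=
        pow_le_pow_left₀ (by linarith [hy.1.le]) (by linarith [hy.2]) 3
      linarith [mul_le_mul_of_nonneg_left h3 hM0]
  have hb2 : |∫ y in (Δx / 2)..(3 * Δx / 2), (w y - Tf y)| ≤ 4 * M * Δx^4 := by
    have h := intervalIntegral.norm_integral_le_of_norm_le_const (C := 4 * M * Δx^3)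
      (f := fun y => w y - Tf y) (a := Δx / 2) (b := 3 * Δx / 2) ?_
    · rw [Real.norm_eq_abs] at h
      refine h.trans ?_
      rw [abs_of_pos (by linarith : (0:ℝ) < 3 * Δx / 2 - Δx / 2)]
      nlinarith [hM0, pow_pos hΔ 3]
    · intro y hy
      rw [uIoc_of_le hmb] at hy
      have hy' : y ∈ Icc (-Δx / 2) (3 * Δx / 2) := ⟨le_trans ham hy.1.le, hy.2⟩
      have ht := htay y hy'
      rw [Real.norm_eq_abs]
      refine ht.trans ?_
      have h3 : (y - (-Δx / 2))^3 ≤ (2 * Δx)^3 :=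
        pow_le_pow_left₀ (by linarith [hy.1.le]) (by linarith [hy.2]) 3
      nlinarith [mul_le_mul_of_nonneg_left h3 hM0]
  have hb3 : |w (Δx / 2) - Tf (Δx / 2)| ≤ M * Δx^3 / 2 := by
    have ht := htay (Δx / 2) ⟨ham, hmb⟩
    refine ht.trans (le_of_eq ?_)
    ring_nf
  have hb3' : |(w (Δx / 2) - Tf (Δx / 2)) * Δx| ≤ M * Δx^4 / 2 := by
    rw [abs_mul, abs_of_pos hΔ]
    calc |w (Δx / 2) - Tf (Δx / 2)| * Δx ≤ (M * Δx^3 / 2) * Δx :=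
          mul_le_mul_of_nonneg_right hb3 hΔ.le
      _ = M * Δx^4 / 2 := by ring
  obtain ⟨l1, u1⟩ := abs_le.mp hb1
  obtain ⟨l2, u2⟩ := abs_le.mp hb2
  obtain ⟨l3, u3⟩ := abs_le.mp hb3'
  -- solve the linear system
  have s2 : α₂ * Δx^3 = 3/2 * (∫ y in (-Δx / 2)..(Δx / 2), (w y - Tf y))
      + 3/2 * (∫ y in (Δx / 2)..(3 * Δx / 2), (w y - Tf y))
      - 3 * ((w (Δx / 2) - Tf (Δx / 2)) * Δx) := by
    linear_combination (3/2) * e1 + (3/2) * e2 - 3 * Δx * e3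
  have s1 : α₁ * Δx^2 = -5/2 * (∫ y in (-Δx / 2)..(Δx / 2), (w y - Tf y))
      - 1/2 * (∫ y in (Δx / 2)..(3 * Δx / 2), (w y - Tf y))
      + 3 * ((w (Δx / 2) - Tf (Δx / 2)) * Δx) := by
    linear_combination (-5/2) * e1 + (-1/2) * e2 + 3 * Δx * e3
  have s0 : α₀ * Δx = 7/8 * (∫ y in (-Δx / 2)..(Δx / 2), (w y - Tf y))
      - 1/8 * (∫ y in (Δx / 2)..(3 * Δx / 2), (w y - Tf y))
      + 1/4 * ((w (Δx / 2) - Tf (Δx / 2)) * Δx) := by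
    linear_combination (7/8) * e1 + (-1/8) * e2 + (1/4) * Δx * e3
  have habs2 : |α₂ * Δx^3| ≤ 33/4 * M * Δx^4 := by
    rw [s2, abs_le]; constructor <;> linarith
  have habs1 : |α₁ * Δx^2| ≤ 19/4 * M * Δx^4 := by
    rw [s1, abs_le]; constructor <;> linarith
  have habs0 : |α₀ * Δx| ≤ 17/16 * M * Δx^4 := by
    rw [s0, abs_le]; constructor <;> linarith
  -- divide out powers of Δx
  have hB2 : |α₂| ≤ 33/4 * M * Δx := by
    rw [abs_mul, abs_pow, abs_of_pos hΔ] at habs2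
    by_contra hcon
    push_neg at hcon
    nlinarith [mul_lt_mul_of_pos_right hcon (pow_pos hΔ 3)]
  have hB1 : |α₁| ≤ 19/4 * M * Δx^2 := by
    rw [abs_mul, abs_pow, abs_of_pos hΔ] at habs1
    by_contra hcon
    push_neg at hcon
    nlinarith [mul_lt_mul_of_pos_right hcon (pow_pos hΔ 2)]
  have hB0 : |α₀| ≤ 17/16 * M * Δx^3 := by
    rw [abs_mul, abs_of_pos hΔ] at habs0
    by_contra hcon
    push_neg at hcon
    nlinarith [mul_lt_mul_of_pos_right hcon hΔ]
  -- conclude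
  have hxb : |x| ≤ Δx / 2 := abs_le.mpr ⟨by linarith [hx.1], hx.2⟩
  have htx : |w x - Tf x| ≤ M * Δx^3 / 2 := by
    refine (htay x ⟨hx.1, le_trans hx.2 hmb⟩).trans ?_
    have h3 : (x - (-Δx / 2))^3 ≤ Δx^3 :=
      pow_le_pow_left₀ (by linarith [hx.1]) (by linarith [hx.2]) 3
    linarith [mul_le_mul_of_nonneg_left h3 hM0]
  have hq : |P.eval x - Tf x|
      ≤ 17/16 * M * Δx^3 + (19/4 * M * Δx^2) * (Δx / 2) + (33/4 * M * Δx) * ((Δx / 2)^2) := by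
    rw [hQ x]
    have t1 : |α₁ * x| ≤ (19/4 * M * Δx^2) * (Δx / 2) := by
      rw [abs_mul]
      exact mul_le_mul hB1 hxb (abs_nonneg x) (by positivity)
    have t2 : |α₂ * x^2| ≤ (33/4 * M * Δx) * ((Δx / 2)^2) := by
      rw [abs_mul, abs_pow]
      exact mul_le_mul hB2 (pow_le_pow_left₀ (abs_nonneg x) hxb 2)
        (by positivity) (by positivity)
    calc |α₀ + α₁ * x + α₂ * x^2| ≤ |α₀| + |α₁ * x| + |α₂ * x^2| :=
          abs_add_three α₀ (α₁ * x) (α₂ * x^2)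
      _ ≤ 17/16 * M * Δx^3 + (19/4 * M * Δx^2) * (Δx / 2) + (33/4 * M * Δx) * ((Δx / 2)^2) :=
          add_le_add (add_le_add hB0 t1) t2
  have hsplit : |P.eval x - w x| ≤ |P.eval x - Tf x| + |w x - Tf x| := by
    have := abs_sub_le_abs_add_abs (P.eval x - Tf x) (w x - Tf x)
    simpa using this
  nlinarith [hsplit, hq, htx, hM0, pow_pos hΔ 3]
end

section
/- Let Δx, Δy > 0 and let Q(x,y) = U₀ + b₂x + b₃y + (1/2)b₄x² + (1/2)b₅y² + b₆xy with arbitrary real coefficients. For m ∈ {0,1} and n ∈ {−1,0,1}, let Ū_{m,n} denote the average of Q over the rectangle [(m−1)Δx, mΔx] × [(n−1/2)Δy, (n+1/2)Δy]. Then: b₂ = [(Ū_{1,1} − Ū_{0,1}) + 2(Ū_{1,0} − Ū_{0,0}) + (Ū_{1,−1} − Ū_{0,−1})]/(4Δx); b₃ = [Ū_{1,1} − Ū_{1,−1} + Ū_{0,1} − Ū_{0,−1}]/(4Δy); b₄ = [26(Ū_{1,0} + Ū_{0,0}) − (Ū_{1,1} + Ū_{0,1} + Ū_{1,−1} + Ū_{0,−1})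 − 48·U₀]/(8Δx²); b₅ = [Ū_{1,1} − 2Ū_{1,0} + Ū_{1,−1} + Ū_{0,1} − 2Ū_{0,0} + Ū_{0,−1}]/(2Δy²); b₆ = [Ū_{1,1} − Ū_{0,1} − Ū_{1,−1} + Ū_{0,−1}]/(2ΔxΔy). In particular, U₀ = Q(0,0) together with the six cell averages determines all coefficients of Q by these formulas. -/
open intervalIntegral

lemma int_poly1 (c0 c1 c2 a b : ℝ) :
    ∫ y in a..b, (c0 + c1 * y + c2 * y ^ 2)
      = c0 * (b - a) + c1 * (b ^ 2 - a ^ 2) / 2 + c2 * (b ^ 3 - a ^ 3) / 3 := by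
  have h1 : IntervalIntegrable (fun y : ℝ => c0 + c1 * y) MeasureTheory.volume a b :=
    (by fun_prop : Continuous fun y : ℝ => c0 + c1 * y).intervalIntegrable a b
  have h2 : IntervalIntegrable (fun y : ℝ => c2 * y ^ 2) MeasureTheory.volume a b :=
    (by fun_prop : Continuous fun y : ℝ => c2 * y ^ 2).intervalIntegrable a b
  have h3 : IntervalIntegrable (fun y : ℝ => c1 * y) MeasureTheory.volume a b :=
    (by fun_prop : Continuous fun y : ℝ => c1 * y).intervalIntegrable a b
  rw [intervalIntegral.integral_add h1 h2,
    intervalIntegral.integral_add (intervalIntegrable_const) h3,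
    intervalIntegral.integral_const, intervalIntegral.integral_const_mul,
    intervalIntegral.integral_const_mul, integral_id, integral_pow]
  push_cast
  rw [smul_eq_mul]
  ring

lemma double_poly (A B C D E F a b c d : ℝ) :
    (∫ x in a..b, ∫ y in c..d, (A + B * x + C * y + D * x ^ 2 + E * y ^ 2 + F * x * y))
      = (A * (d - c) + C * (d ^ 2 - c ^ 2) / 2 + E * (d ^ 3 - c ^ 3) / 3) * (b - a)
        + (B * (d - c) + F * (d ^ 2 - c ^ 2) / 2) * (b ^ 2 - a ^ 2) / 2
        + (D * (d - c)) * (b ^ 3 - a ^ 3) / 3 := by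
  have inner : ∀ x : ℝ,
      (∫ y in c..d, (A + B * x + C * y + D * x ^ 2 + E * y ^ 2 + F * x * y))
        = (A * (d - c) + C * (d ^ 2 - c ^ 2) / 2 + E * (d ^ 3 - c ^ 3) / 3)
          + (B * (d - c) + F * (d ^ 2 - c ^ 2) / 2) * x
          + (D * (d - c)) * x ^ 2 := by
    intro x
    have h := int_poly1 (A + B * x + D * x ^ 2) (C + F * x) E c d
    rw [show (∫ y in c..d, (A + B * x + C * y + D * x ^ 2 + E * y ^ 2 + F * x * y))
        = ∫ y in c..d, ((A + B * x + D * x ^ 2) + (C + F * x) * y + E * y ^ 2) from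
      intervalIntegral.integral_congr (fun y _ => by ring), h]
    ring
  rw [show (∫ x in a..b, ∫ y in c..d, (A + B * x + C * y + D * x ^ 2 + E * y ^ 2 + F * x * y))
      = ∫ x in a..b, ((A * (d - c) + C * (d ^ 2 - c ^ 2) / 2 + E * (d ^ 3 - c ^ 3) / 3)
          + (B * (d - c) + F * (d ^ 2 - c ^ 2) / 2) * x
          + (D * (d - c)) * x ^ 2) from
    intervalIntegral.integral_congr (fun x _ => inner x), int_poly1]

set_option maxHeartbeats 2000000 in
/-- The compact reconstruction formulas for the equilibrium part recover the
coefficients of a quadratic `Q` exactly from its interface value `U₀ = Q(0,0)`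
and its averages over the six cells adjacent to the interface. -/
theorem equilibrium_reconstruction_exact (Δx Δy : ℝ) (hΔx : 0 < Δx) (hΔy : 0 < Δy)
    (U₀ b₂ b₃ b₄ b₅ b₆ : ℝ) :
    let Q : ℝ → ℝ → ℝ := fun x y =>
      U₀ + b₂ * x + b₃ * y + (1 / 2) * b₄ * x ^ 2 + (1 / 2) * b₅ * y ^ 2 + b₆ * x * y
    let Ub : ℝ → ℝ → ℝ := fun m n => (1 / (Δx * Δy)) *
      ∫ x in ((m - 1) * Δx)..(m * Δx),
        ∫ y in ((n - 1 / 2) * Δy)..((n + 1 / 2) * Δy), Q x y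
    b₂ = ((Ub 1 1 - Ub 0 1) + 2 * (Ub 1 0 - Ub 0 0) + (Ub 1 (-1) - Ub 0 (-1)))
        / (4 * Δx) ∧
    b₃ = (Ub 1 1 - Ub 1 (-1) + Ub 0 1 - Ub 0 (-1)) / (4 * Δy) ∧
    b₄ = (26 * (Ub 1 0 + Ub 0 0) - (Ub 1 1 + Ub 0 1 + Ub 1 (-1) + Ub 0 (-1))
        - 48 * U₀) / (8 * Δx ^ 2) ∧
    b₅ = (Ub 1 1 - 2 * Ub 1 0 + Ub 1 (-1) + Ub 0 1 - 2 * Ub 0 0 + Ub 0 (-1))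
        / (2 * Δy ^ 2) ∧
    b₆ = (Ub 1 1 - Ub 0 1 - Ub 1 (-1) + Ub 0 (-1)) / (2 * Δx * Δy) ∧
    U₀ = Q 0 0 := by
  intro Q Ub
  have hx := hΔx.ne'
  have hy := hΔy.ne'
  have key : ∀ m n : ℝ, Ub m n = U₀ + b₂ * (2 * m - 1) * Δx / 2 + b₃ * n * Δy
      + b₄ * (3 * m ^ 2 - 3 * m + 1) * Δx ^ 2 / 6 + b₅ * (n ^ 2 + 1 / 12) * Δy ^ 2 / 2
      + b₆ * (2 * m - 1) * n * Δx * Δy / 2 := by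
    intro m n
    simp only [Ub, Q]
    rw [double_poly U₀ b₂ b₃ ((1/2) * b₄) ((1/2) * b₅) b₆, one_div,
      inv_mul_eq_iff_eq_mul₀ (by positivity)]
    ring
  refine ⟨?_, ?_, ?_, ?_, ?_, by simp only [Q]; norm_num⟩ <;>
    · simp only [key]
      field_simp
      ring
end

section
/- Let K ∈ ℕ and let g_l, g_r : ℝ × ℝ × ℝ^K → ℝ be two Maxwellians, g_k(u,v,ξ) = ρ_k·(λ_k/π)^{(K+2)/2}·exp(−λ_k((u−U_k)² + (v−V_k)² + |ξ|²)) with ρ_k > 0, λ_k > 0, for k = l, r. Define the interface state (ρ₀, m₀, n₀, ε₀) by ρ₀ = ∫_{u>0} g_l + ∫_{u<0} g_r, m₀ = ∫_{u>0} u·g_l + ∫_{u<0} u·g_r, n₀ = ∫_{u>0} v·g_l + ∫_{u<0} v·g_r, ε₀ = ∫_{u>0} (1/2)(u²+v²+|ξ|²)·g_l + ∫_{u<0} (1/2)(u²+v²+|ξ|²)·g_r, where the integrals are over {u>0}×ℝ×ℝ^K and {u<0}×ℝ×ℝ^K respectively. Then ρ₀ > 0 and 2ρ₀ε₀ − m₀²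 − n₀² > 0; that is, the interface state has positive density and positive internal energy. -/
open MeasureTheory

section Aux

lemma int_pow_gauss {b : ℝ} (hb : 0 < b) (n : ℕ) :
    Integrable fun x : ℝ => x ^ n * Real.exp (-b * x ^ 2) := by
  have h : (-1 : ℝ) < (n : ℝ) := lt_of_lt_of_le (by norm_num) (Nat.cast_nonneg n)
  simpa [Real.rpow_natCast] using integrable_rpow_mul_exp_neg_mul_sq hb h

lemma int_pow_gauss_shift {b : ℝ} (hb : 0 < b) (U : ℝ) (n : ℕ) :
    Integrable fun x : ℝ => x ^ n * Real.exp (-b * (x - U) ^ 2) := by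
  have base : ∀ m : ℕ,
      Integrable fun x : ℝ => (x - U) ^ m * Real.exp (-b * (x - U) ^ 2) := by
    intro m
    simpa using (int_pow_gauss hb m).comp_sub_right U
  have key : (fun x : ℝ => x ^ n * Real.exp (-b * (x - U) ^ 2))
      = fun x => ∑ k ∈ Finset.range (n + 1),
          ((n.choose k : ℝ) * U ^ (n - k)) *
            ((x - U) ^ k * Real.exp (-b * (x - U) ^ 2)) := by
    funext x
    have hx : x ^ n = ∑ k ∈ Finset.range (n + 1),
        (x - U) ^ k * U ^ (n - k) * (n.choose k : ℝ) := by
      rw [← add_pow]; norm_num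
    rw [hx, Finset.sum_mul]
    exact Finset.sum_congr rfl fun k _ => by ring
  rw [key]
  exact integrable_finset_sum _ fun k _ => (base k).const_mul _

lemma int_gauss_pi (K : ℕ) {b : ℝ} (hb : 0 < b) :
    Integrable fun ξ : Fin K → ℝ => Real.exp (-b * ∑ i, ξ i ^ 2) := by
  have h := Integrable.fintype_prod
    (f := fun (_ : Fin K) (x : ℝ) => Real.exp (-b * x ^ 2))
    (fun _ => integrable_exp_neg_mul_sq hb)
  refine h.congr (Filter.Eventually.of_forall fun ξ => ?_)
  show ∏ i, Real.exp (-b * ξ i ^ 2) = Real.exp (-b * ∑ i, ξ i ^ 2)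
  rw [← Real.exp_sum, Finset.mul_sum]

lemma int_sq_gauss_pi (K : ℕ) {b : ℝ} (hb : 0 < b) :
    Integrable fun ξ : Fin K → ℝ => (∑ i, ξ i ^ 2) * Real.exp (-b * ∑ i, ξ i ^ 2) := by
  have hterm : ∀ j : Fin K, Integrable fun ξ : Fin K → ℝ =>
      ∏ i, ((if j = i then (ξ i) ^ 2 else 1) * Real.exp (-b * (ξ i) ^ 2)) := by
    intro j
    apply Integrable.fintype_prod
      (f := fun i (x : ℝ) => (if j = i then x ^ 2 else 1) * Real.exp (-b * x ^ 2))
    intro i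
    by_cases h : j = i
    · simpa [h] using int_pow_gauss hb 2
    · simpa [h] using integrable_exp_neg_mul_sq hb
  have h := integrable_finset_sum (μ := (volume : Measure (Fin K → ℝ)))
    Finset.univ (fun j _ => hterm j)
  refine h.congr (Filter.Eventually.of_forall fun ξ => ?_)
  have hj : ∀ j : Fin K,
      ∏ i, ((if j = i then (ξ i) ^ 2 else 1) * Real.exp (-b * (ξ i) ^ 2))
        = (ξ j) ^ 2 * Real.exp (-b * ∑ i, ξ i ^ 2) := by
    intro j
    rw [Finset.prod_mul_distrib, Finset.prod_ite_eq, ← Real.exp_sum]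
    simp [Finset.mul_sum]
  calc ∑ j, ∏ i, ((if j = i then (ξ i) ^ 2 else 1) * Real.exp (-b * (ξ i) ^ 2))
      = ∑ j, (ξ j) ^ 2 * Real.exp (-b * ∑ i, ξ i ^ 2) :=
        Finset.sum_congr rfl fun j _ => hj j
    _ = (∑ j, (ξ j) ^ 2) * Real.exp (-b * ∑ i, ξ i ^ 2) := (Finset.sum_mul _ _ _).symm

lemma int_prod3 {K : ℕ} {f1 f2 : ℝ → ℝ} {f3 : (Fin K → ℝ) → ℝ}
    (h1 : Integrable f1) (h2 : Integrable f2) (h3 : Integrable f3) :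
    Integrable fun w : ℝ × ℝ × (Fin K → ℝ) => f1 w.1 * (f2 w.2.1 * f3 w.2.2) := by
  have h23 : Integrable fun p : ℝ × (Fin K → ℝ) => f2 p.1 * f3 p.2 := by
    rw [Measure.volume_eq_prod]; exact h2.mul_prod h3
  rw [Measure.volume_eq_prod]; exact h1.mul_prod h23

lemma maxw_integrable (K : ℕ) {b : ℝ} (hb : 0 < b) (C U V : ℝ) :
    (∀ nu nv : ℕ, Integrable fun w : ℝ × ℝ × (Fin K → ℝ) =>
        w.1 ^ nu * w.2.1 ^ nv *
          (C * Real.exp (-b * ((w.1 - U) ^ 2 + (w.2.1 - V) ^ 2 + ∑ i, w.2.2 i ^ 2)))) ∧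
      Integrable fun w : ℝ × ℝ × (Fin K → ℝ) =>
        (∑ i, w.2.2 i ^ 2) *
          (C * Real.exp (-b * ((w.1 - U) ^ 2 + (w.2.1 - V) ^ 2 + ∑ i, w.2.2 i ^ 2))) := by
  have split : ∀ w : ℝ × ℝ × (Fin K → ℝ),
      Real.exp (-b * ((w.1 - U) ^ 2 + (w.2.1 - V) ^ 2 + ∑ i, w.2.2 i ^ 2))
        = Real.exp (-b * (w.1 - U) ^ 2) *
            (Real.exp (-b * (w.2.1 - V) ^ 2) * Real.exp (-b * ∑ i, w.2.2 i ^ 2)) := by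
    intro w
    rw [← Real.exp_add, ← Real.exp_add]
    congr 1; ring
  constructor
  · intro nu nv
    have h := (int_prod3 (int_pow_gauss_shift hb U nu)
        (int_pow_gauss_shift hb V nv) (int_gauss_pi K hb)).const_mul C
    refine h.congr (Filter.Eventually.of_forall fun w => ?_)
    simp only [split w]; ring
  · have h := (int_prod3 (int_pow_gauss_shift hb U 0)
        (int_pow_gauss_shift hb V 0) (int_sq_gauss_pi K hb)).const_mul C
    refine h.congr (Filter.Eventually.of_forall fun w => ?_)
    simp only [split w]; ring

end Aux

/-- The interface state formed from the half-space moments of the left and right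
Maxwellians has positive density and positive internal energy. -/
theorem interface_state_realizable (K : ℕ)
    (ρl ρr laml lamr Ul Ur Vl Vr : ℝ)
    (hρl : 0 < ρl) (hρr : 0 < ρr) (hlaml : 0 < laml) (hlamr : 0 < lamr) :
    let gl : ℝ → ℝ → (Fin K → ℝ) → ℝ := fun u v ξ =>
      ρl * (laml / Real.pi) ^ (((K : ℝ) + 2) / 2) *
        Real.exp (-laml * ((u - Ul) ^ 2 + (v - Vl) ^ 2 + ∑ i, ξ i ^ 2))
    let gr : ℝ → ℝ → (Fin K → ℝ) → ℝ := fun u v ξ =>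
      ρr * (lamr / Real.pi) ^ (((K : ℝ) + 2) / 2) *
        Real.exp (-lamr * ((u - Ur) ^ 2 + (v - Vr) ^ 2 + ∑ i, ξ i ^ 2))
    let Sp : Set (ℝ × ℝ × (Fin K → ℝ)) := {w | 0 < w.1}
    let Sm : Set (ℝ × ℝ × (Fin K → ℝ)) := {w | w.1 < 0}
    let ρ₀ : ℝ := (∫ w in Sp, gl w.1 w.2.1 w.2.2) + ∫ w in Sm, gr w.1 w.2.1 w.2.2
    let m₀ : ℝ := (∫ w in Sp, w.1 * gl w.1 w.2.1 w.2.2)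
      + ∫ w in Sm, w.1 * gr w.1 w.2.1 w.2.2
    let n₀ : ℝ := (∫ w in Sp, w.2.1 * gl w.1 w.2.1 w.2.2)
      + ∫ w in Sm, w.2.1 * gr w.1 w.2.1 w.2.2
    let ε₀ : ℝ := (∫ w in Sp,
        (1 / 2) * (w.1 ^ 2 + w.2.1 ^ 2 + ∑ i, w.2.2 i ^ 2) * gl w.1 w.2.1 w.2.2)
      + ∫ w in Sm,
        (1 / 2) * (w.1 ^ 2 + w.2.1 ^ 2 + ∑ i, w.2.2 i ^ 2) * gr w.1 w.2.1 w.2.2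
    0 < ρ₀ ∧ 0 < 2 * ρ₀ * ε₀ - m₀ ^ 2 - n₀ ^ 2 := by
  intro gl gr Sp Sm ρ₀ m₀ n₀ ε₀
  classical
  have hpi := Real.pi_pos
  set glF : ℝ × ℝ × (Fin K → ℝ) → ℝ := fun w =>
    ρl * (laml / Real.pi) ^ (((K : ℝ) + 2) / 2) *
      Real.exp (-laml * ((w.1 - Ul) ^ 2 + (w.2.1 - Vl) ^ 2 + ∑ i, w.2.2 i ^ 2)) with hglF
  set grF : ℝ × ℝ × (Fin K → ℝ) → ℝ := fun w =>
    ρr * (lamr / Real.pi) ^ (((K : ℝ) + 2) / 2) *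
      Real.exp (-lamr * ((w.1 - Ur) ^ 2 + (w.2.1 - Vr) ^ 2 + ∑ i, w.2.2 i ^ 2)) with hgrF
  have hglpos : ∀ w, 0 < glF w := fun w => by rw [hglF]; positivity
  have hgrpos : ∀ w, 0 < grF w := fun w => by rw [hgrF]; positivity
  have hSp : MeasurableSet Sp := measurableSet_lt measurable_const measurable_fst
  have hSm : MeasurableSet Sm := measurableSet_lt measurable_fst measurable_const
  obtain ⟨Pl, Sl⟩ := maxw_integrable K hlaml
    (ρl * (laml / Real.pi) ^ (((K : ℝ) + 2) / 2)) Ul Vl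
  obtain ⟨Pr, Sr⟩ := maxw_integrable K hlamr
    (ρr * (lamr / Real.pi) ^ (((K : ℝ) + 2) / 2)) Ur Vr
  have Igl : Integrable glF := by rw [hglF]; simpa using Pl 0 0
  have Igr : Integrable grF := by rw [hgrF]; simpa using Pr 0 0
  have Iugl : Integrable fun w : ℝ × ℝ × (Fin K → ℝ) => w.1 * glF w := by
    rw [hglF]; simpa using Pl 1 0
  have Iugr : Integrable fun w : ℝ × ℝ × (Fin K → ℝ) => w.1 * grF w := by
    rw [hgrF]; simpa using Pr 1 0
  have Ivgl : Integrable fun w : ℝ × ℝ × (Fin K → ℝ) => w.2.1 * glF w := by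
    rw [hglF]; simpa using Pl 0 1
  have Ivgr : Integrable fun w : ℝ × ℝ × (Fin K → ℝ) => w.2.1 * grF w := by
    rw [hgrF]; simpa using Pr 0 1
  set q : ℝ × ℝ × (Fin K → ℝ) → ℝ :=
    fun w => w.1 ^ 2 + w.2.1 ^ 2 + ∑ i, w.2.2 i ^ 2 with hq
  have Iqgl : Integrable fun w => q w * glF w := by
    have h1 : Integrable fun w : ℝ × ℝ × (Fin K → ℝ) => w.1 ^ 2 * glF w := by
      rw [hglF]; simpa using Pl 2 0
    have h2 : Integrable fun w : ℝ × ℝ × (Fin K → ℝ) => w.2.1 ^ 2 * glF w := by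
      rw [hglF]; simpa using Pl 0 2
    have h3 : Integrable fun w : ℝ × ℝ × (Fin K → ℝ) => (∑ i, w.2.2 i ^ 2) * glF w := by
      rw [hglF]; simpa using Sl
    refine ((h1.add h2).add h3).congr (Filter.Eventually.of_forall fun w => ?_)
    simp only [Pi.add_apply, hq]; ring
  have Iqgr : Integrable fun w => q w * grF w := by
    have h1 : Integrable fun w : ℝ × ℝ × (Fin K → ℝ) => w.1 ^ 2 * grF w := by
      rw [hgrF]; simpa using Pr 2 0
    have h2 : Integrable fun w : ℝ × ℝ × (Fin K → ℝ) => w.2.1 ^ 2 * grF w := by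
      rw [hgrF]; simpa using Pr 0 2
    have h3 : Integrable fun w : ℝ × ℝ × (Fin K → ℝ) => (∑ i, w.2.2 i ^ 2) * grF w := by
      rw [hgrF]; simpa using Sr
    refine ((h1.add h2).add h3).congr (Filter.Eventually.of_forall fun w => ?_)
    simp only [Pi.add_apply, hq]; ring
  set G : ℝ × ℝ × (Fin K → ℝ) → ℝ :=
    fun w => Sp.indicator glF w + Sm.indicator grF w with hG
  have hptw : ∀ (φ : ℝ × ℝ × (Fin K → ℝ) → ℝ) w,
      Sp.indicator (fun w => φ w * glF w) w + Sm.indicator (fun w => φ w * grF w) w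
        = φ w * G w := by
    intro φ w
    simp only [hG, Set.indicator_apply]
    split_ifs <;> ring
  have hint : ∀ (φ : ℝ × ℝ × (Fin K → ℝ) → ℝ),
      Integrable (fun w => φ w * glF w) → Integrable (fun w => φ w * grF w) →
      Integrable (fun w => φ w * G w) := fun φ h1 h2 =>
    ((h1.indicator hSp).add (h2.indicator hSm)).congr
      (Filter.Eventually.of_forall fun w => hptw φ w)
  have hmoment : ∀ (φ : ℝ × ℝ × (Fin K → ℝ) → ℝ),
      Integrable (fun w => φ w * glF w) → Integrable (fun w => φ w * grF w) →
      (∫ w in Sp, φ w * glF w) + (∫ w in Sm, φ w * grF w) = ∫ w, φ w * G w := by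
    intro φ h1 h2
    rw [← integral_indicator hSp, ← integral_indicator hSm,
      ← integral_add (h1.indicator hSp) (h2.indicator hSm)]
    exact integral_congr_ae (Filter.Eventually.of_forall fun w => hptw φ w)
  have IG : Integrable G := by
    have := hint (fun _ => 1) (by simpa using Igl) (by simpa using Igr)
    simpa using this
  have IuG : Integrable fun w => w.1 * G w := hint _ Iugl Iugr
  have IvG : Integrable fun w => w.2.1 * G w := hint _ Ivgl Ivgr
  have IqG : Integrable fun w => q w * G w := hint _ Iqgl Iqgr
  have hρeq : ρ₀ = ∫ w, G w := by
    have h := hmoment (fun _ => 1) (by simpa using Igl) (by simpa using Igr)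
    simpa using h
  have hmeq : m₀ = ∫ w, w.1 * G w := hmoment (fun w => w.1) Iugl Iugr
  have hneq : n₀ = ∫ w, w.2.1 * G w := hmoment (fun w => w.2.1) Ivgl Ivgr
  have hεint_l : Integrable fun w => (1 / 2 * q w) * glF w :=
    (Iqgl.const_mul (1 / 2)).congr
      (Filter.Eventually.of_forall fun w => (mul_assoc (1 / 2) (q w) (glF w)).symm)
  have hεint_r : Integrable fun w => (1 / 2 * q w) * grF w :=
    (Iqgr.const_mul (1 / 2)).congr
      (Filter.Eventually.of_forall fun w => (mul_assoc (1 / 2) (q w) (grF w)).symm)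
  have hεeq : ε₀ = ∫ w, (1 / 2 * q w) * G w := hmoment (fun w => 1 / 2 * q w) hεint_l hεint_r
  have hε2 : ε₀ = (1 / 2) * ∫ w, q w * G w := by
    have hc : ∫ w, (1 / 2 * q w) * G w = ∫ w, (1 / 2 : ℝ) * (q w * G w) :=
      integral_congr_ae (Filter.Eventually.of_forall fun w => mul_assoc _ _ _)
    rw [hεeq, hc, integral_const_mul]
  set A : ℝ := ∫ w, G w with hAdef
  set B : ℝ := ∫ w, w.1 * G w with hBdef
  set N : ℝ := ∫ w, w.2.1 * G w with hNdef
  set Q : ℝ := ∫ w, q w * G w with hQdef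
  have hGnonneg : ∀ w, 0 ≤ G w := fun w => by
    simp only [hG]
    exact add_nonneg (Set.indicator_nonneg (fun x _ => (hglpos x).le) w)
      (Set.indicator_nonneg (fun x _ => (hgrpos x).le) w)
  have hApos : 0 < A := by
    rw [hAdef]
    refine (integral_pos_iff_support_of_nonneg_ae
      (Filter.Eventually.of_forall hGnonneg) IG).mpr ?_
    have hopen : IsOpen {w : ℝ × ℝ × (Fin K → ℝ) | 0 < w.1} :=
      isOpen_lt continuous_const continuous_fst
    refine lt_of_lt_of_le (hopen.measure_pos volume ⟨(1, 0, fun _ => 0), show (0:ℝ) < 1 from one_pos⟩)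
      (measure_mono ?_)
    intro w hw
    have : 0 < G w := by
      simp only [hG]
      rw [Set.indicator_of_mem (show w ∈ Sp from hw) glF]
      exact add_pos_of_pos_of_nonneg (hglpos w)
        (Set.indicator_nonneg (fun x _ => (hgrpos x).le) w)
    exact this.ne'
  have hA0 : A ≠ 0 := ne_of_gt hApos
  set c : ℝ := B / A with hcdef
  set d : ℝ := N / A with hddef
  set R : ℝ × ℝ × (Fin K → ℝ) → ℝ :=
    fun w => (w.1 - c) ^ 2 + (w.2.1 - d) ^ 2 + ∑ i, w.2.2 i ^ 2 with hR
  have hRGfun : (fun w => R w * G w)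
      = fun w => q w * G w - 2 * c * (w.1 * G w) - 2 * d * (w.2.1 * G w)
          + (c ^ 2 + d ^ 2) * G w := funext fun w => by
    simp only [hR, hq]; ring
  have I1 : Integrable fun w => q w * G w - 2 * c * (w.1 * G w) :=
    IqG.sub (IuG.const_mul (2 * c))
  have I2 : Integrable fun w => q w * G w - 2 * c * (w.1 * G w) - 2 * d * (w.2.1 * G w) :=
    I1.sub (IvG.const_mul (2 * d))
  have IRG : Integrable fun w => R w * G w := by
    rw [hRGfun]
    exact I2.add (IG.const_mul (c ^ 2 + d ^ 2))
  have hval : ∫ w, R w * G w = Q - 2 * c * B - 2 * d * N + (c ^ 2 + d ^ 2) * A := by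
    rw [hRGfun, integral_add I2 (IG.const_mul (c ^ 2 + d ^ 2)),
      integral_sub I1 (IvG.const_mul (2 * d)),
      integral_sub IqG (IuG.const_mul (2 * c)),
      integral_const_mul, integral_const_mul, integral_const_mul,
      hAdef, hBdef, hNdef, hQdef]
  have hRpos : 0 < ∫ w, R w * G w := by
    refine (integral_pos_iff_support_of_nonneg_ae
      (Filter.Eventually.of_forall fun w => ?_) IRG).mpr ?_
    · have h1 : 0 ≤ R w := by simp only [hR]; positivity
      exact mul_nonneg h1 (hGnonneg w)
    · have hT : IsOpen {w : ℝ × ℝ × (Fin K → ℝ) | 0 < w.1 ∧ w.1 ≠ c} :=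
        (isOpen_lt continuous_const continuous_fst).inter
          (isOpen_ne_fun continuous_fst continuous_const)
      have hTne : Set.Nonempty {w : ℝ × ℝ × (Fin K → ℝ) | 0 < w.1 ∧ w.1 ≠ c} :=
        ⟨(max c 0 + 1, 0, fun _ => 0),
          lt_of_le_of_lt (le_max_right c 0) (lt_add_one _),
          ne_of_gt (lt_of_le_of_lt (le_max_left c 0) (lt_add_one _))⟩
      refine lt_of_lt_of_le (hT.measure_pos volume hTne) (measure_mono ?_)
      rintro w ⟨hw1, hw2⟩
      have hGpos : 0 < G w := by
        simp only [hG]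
        rw [Set.indicator_of_mem (show w ∈ Sp from hw1) glF]
        exact add_pos_of_pos_of_nonneg (hglpos w)
          (Set.indicator_nonneg (fun x _ => (hgrpos x).le) w)
      have hRw : 0 < R w := by
        have h2 : w.1 - c ≠ 0 := sub_ne_zero.mpr hw2
        simp only [hR]
        positivity
      exact (mul_pos hRw hGpos).ne'
  refine ⟨by rw [hρeq]; exact hApos, ?_⟩
  have key : 2 * ρ₀ * ε₀ - m₀ ^ 2 - n₀ ^ 2 = A * ∫ w, R w * G w := by
    rw [hρeq, hmeq, hneq, hε2, hval, hcdef, hddef]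
    field_simp
    ring
  rw [key]
  exact mul_pos hApos hRpos
end
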